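/- arXiv:1603.07382 — 6 statements merged into one kernel-verified Lean document; each statement's English description precedes it below -/
import Mathlib

section
/- Fix α > 0 and k ∈ ℕ, k ≥ 1, and define h_k(x) = Σ_{j=0}^{k} (-1)^j C(k,j) (x-j)_+^α for x ∈ ℝ, where y_+ = max(y,0). Then there is a constant K such that |h_k(x)| ≤ K (x-k)^{α-k} for all x > k+1. -/
/-!
For `x > k + 1` every `(x - j)₊` equals `x - j`, so `h_k(x)` is the `k`-th forward difference of
`t ↦ t ^ α` at `x - k`. By the mean value theorem the `(n+1)`-st difference of `f` at `y` is the
`n`-th difference of `f'` at some point of `(y, y + 1)`, and `(t ^ β)' = β t ^ (β - 1)`; induction on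
`n` then bounds the `n`-th difference of `t ^ β` by `K y ^ (β - n)` for `y ≥ 1`, a factor `2 ^ |γ|`
absorbing the move from `c ^ γ` back to `y ^ γ`, as `c ∈ (y, y + 1) ⊆ [y, 2y]`.
-/

open Finset Set fwdDiff

lemma hasDerivAt_fwdDiff_iter {f f' : ℝ → ℝ} {y : ℝ} (n : ℕ)
    (hf : ∀ t ∈ Icc y (y + n), HasDerivAt f (f' t) t) :
    HasDerivAt ((Δ_[1])^[n] f) ((Δ_[1])^[n] f' y) y := by
  induction n generalizing f f' with
  | zero => simpa using hf y (by simp)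
  | succ n ih =>
    refine ih fun t ht => ?_
    have hshift : HasDerivAt (fun s => f (s + 1)) (f' (t + 1)) t :=
      (hf (t + 1) ⟨by linarith [ht.1], by push_cast at ht ⊢; linarith [ht.2]⟩).comp_add_const t 1
    exact hshift.sub (hf t ⟨ht.1, by push_cast; linarith [ht.2]⟩)

lemma exists_fwdDiff_iter_succ_eq {f f' : ℝ → ℝ} {y : ℝ} (n : ℕ)
    (hf : ∀ t ∈ Icc y (y + (n + 1)), HasDerivAt f (f' t) t) :
    ∃ c ∈ Ioo y (y + 1), (Δ_[1])^[n + 1] f y = (Δ_[1])^[n] f' c := by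
  have hderiv : ∀ t ∈ Icc y (y + 1), HasDerivAt ((Δ_[1])^[n] f) ((Δ_[1])^[n] f' t) t :=
    fun t ht => hasDerivAt_fwdDiff_iter n fun s hs =>
      hf s ⟨ht.1.trans hs.1, by linarith [ht.2, hs.2]⟩
  obtain ⟨c, hc, hslope⟩ := exists_hasDerivAt_eq_slope ((Δ_[1])^[n] f) ((Δ_[1])^[n] f')
    (lt_add_one y) (fun t ht => (hderiv t ht).continuousAt.continuousWithinAt)
    (fun t ht => hderiv t (Ioo_subset_Icc_self ht))
  refine ⟨c, hc, ?_⟩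
  rw [hslope, add_sub_cancel_left, div_one, Function.iterate_succ_apply']
  rfl

lemma rpow_le_two_rpow_abs_mul_rpow {y c : ℝ} (γ : ℝ) (hy : 0 < y) (hyc : y ≤ c)
    (hc : c ≤ 2 * y) : c ^ γ ≤ 2 ^ |γ| * y ^ γ := by
  rcases le_or_gt 0 γ with hγ | hγ
  · calc c ^ γ ≤ (2 * y) ^ γ := Real.rpow_le_rpow (by linarith) hc hγ
      _ = 2 ^ γ * y ^ γ := Real.mul_rpow zero_le_two hy.le
      _ ≤ 2 ^ |γ| * y ^ γ := by
        gcongr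
        · exact one_le_two
        · exact le_abs_self γ
  · calc c ^ γ ≤ y ^ γ := Real.rpow_le_rpow_of_nonpos hy hyc hγ.le
      _ ≤ 2 ^ |γ| * y ^ γ :=
        le_mul_of_one_le_left (Real.rpow_nonneg hy.le γ) (Real.one_le_rpow one_le_two (abs_nonneg γ))

lemma abs_fwdDiff_iter_rpow_le (n : ℕ) (β : ℝ) :
    ∃ K > (0 : ℝ), ∀ y : ℝ, 1 ≤ y → |(Δ_[1])^[n] (fun t => t ^ β) y| ≤ K * y ^ (β - n) := by
  induction n generalizing β with
  | zero =>
    refine ⟨1, one_pos, fun y hy => ?_⟩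
    simp [abs_of_nonneg (Real.rpow_nonneg (zero_le_one.trans hy) β)]
  | succ n ih =>
    obtain ⟨K, hK, hbound⟩ := ih (β - 1)
    refine ⟨(|β| + 1) * K * 2 ^ |β - 1 - n|, by positivity, fun y hy => ?_⟩
    obtain ⟨c, hc, hdiff⟩ := exists_fwdDiff_iter_succ_eq (f' := fun t => β • t ^ (β - 1)) n
      fun t ht => Real.hasDerivAt_rpow_const (Or.inl (by linarith [ht.1]))
    have hpow : c ^ (β - 1 - n) ≤ 2 ^ |β - 1 - n| * y ^ (β - 1 - n) :=
      rpow_le_two_rpow_abs_mul_rpow _ (by linarith) hc.1.le (by linarith [hc.2])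
    rw [hdiff, show (fun t => β • t ^ (β - 1)) = β • fun t => t ^ (β - 1) from rfl,
      fwdDiff_iter_const_smul, Pi.smul_apply, smul_eq_mul, abs_mul]
    calc |β| * |(Δ_[1])^[n] (fun t => t ^ (β - 1)) c|
        ≤ (|β| + 1) * (K * (2 ^ |β - 1 - n| * y ^ (β - 1 - n))) := by
          gcongr
          · linarith
          · exact (hbound c (by linarith [hc.1])).trans (by gcongr)
      _ = (|β| + 1) * K * 2 ^ |β - 1 - n| * y ^ (β - ↑(n + 1)) := by push_cast; ring_nf

lemma fwdDiff_iter_sub_eq_sum (f : ℝ → ℝ) (n : ℕ) (x : ℝ) :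
    (Δ_[1])^[n] f (x - n) = ∑ j ∈ range (n + 1), (-1) ^ j * (n.choose j : ℝ) * f (x - j) := by
  rw [fwdDiff_iter_eq_sum_shift, ← sum_range_reflect]
  refine sum_congr rfl fun j hj => ?_
  have hj : j ≤ n := Nat.lt_succ_iff.mp (mem_range.mp hj)
  rw [Nat.add_sub_cancel, Nat.sub_sub_self hj, Nat.choose_symm hj, zsmul_eq_mul, nsmul_eq_mul,
    Nat.cast_sub hj]
  push_cast
  ring_nf

theorem stmt1_general (α : ℝ) (k : ℕ) :
    ∃ K > (0:ℝ), ∀ x : ℝ, (k : ℝ) + 1 < x →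
      |∑ j ∈ Finset.range (k+1), (-1:ℝ)^j * (k.choose j : ℝ) * (max (x - j) 0) ^ α|
        ≤ K * (x - k) ^ (α - (k:ℝ)) := by
  obtain ⟨K, hK, hbound⟩ := abs_fwdDiff_iter_rpow_le k α
  refine ⟨K, hK, fun x hx => ?_⟩
  have hpos : ∀ j ∈ range (k + 1), max (x - j) 0 = x - j := fun j hj => by
    have : (j : ℝ) ≤ k := by exact_mod_cast Nat.lt_succ_iff.mp (mem_range.mp hj)
    exact max_eq_left (by linarith)
  rw [sum_congr rfl fun j hj => by rw [hpos j hj], ← fwdDiff_iter_sub_eq_sum (fun t => t ^ α)]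
  exact hbound _ (by linarith)

theorem stmt1 (α : ℝ) (hα : 0 < α) (k : ℕ) (hk : 1 ≤ k) :
    ∃ K > (0:ℝ), ∀ x : ℝ, (k : ℝ) + 1 < x →
      |∑ j ∈ Finset.range (k+1), (-1:ℝ)^j * (k.choose j : ℝ) * (max (x - j) 0) ^ α|
        ≤ K * (x - k) ^ (α - (k:ℝ)) :=
  stmt1_general α k
end

section
/- Let V = (V_1,…,V_d) be an absolutely continuous random vector in ℝ^d whose density v is continuously differentiable on an open convex set A ⊆ ℝ^d and vanishes outside A. Then as n → ∞, the vector of fractional parts ({nV_1},…,{nV_d}) converges stably in law (with respect to the σ-algebra generated by V) to (U_1,…,U_d), where U_1,…,U_d are i.i.d. uniform on [0,1] and independent of V. -/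
/-!
For `F` continuous with compact support, the substitution `x ↦ x + t / n` gives
`∫ F (x, {n x}) dx = ∫ F (x + t / n, {n x + t}) dx` for every `t`. Averaging over `t` in the unit
cube, and using that `t ↦ {c + t}` preserves Lebesgue measure on the cube, this differs from
`∫ ∫_{[0,1]^d} F (x, u) du dx` by at most the modulus of uniform continuity of `F` at `1 / n`
times a fixed volume. A cutoff equal to `1` on the cube turns `f x u * g x` with `g` continuous
with compact support into such an `F`, and the density of these `g` in `L¹` extends the
convergence to the weight given by the density of the law of `V`.
-/

open MeasureTheory ProbabilityTheory Filter Set Metric Topology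

lemma tendsto_of_forall_dist_le {α β : Type*} [PseudoMetricSpace β] {l : Filter α} {a : α → β}
    {a₀ : β} (h : ∀ ε > 0, ∃ b : α → β, ∃ b₀, Tendsto b l (𝓝 b₀) ∧
      (∀ n, dist (a n) (b n) ≤ ε) ∧ dist a₀ b₀ ≤ ε) :
    Tendsto a l (𝓝 a₀) := by
  rw [Metric.tendsto_nhds]
  intro ε hε
  obtain ⟨b, b₀, hb, hab, hab₀⟩ := h (ε / 3) (by positivity)
  filter_upwards [Metric.tendsto_nhds.1 hb (ε / 3) (by positivity)] with n hn
  calc dist (a n) a₀ ≤ dist (a n) (b n) + dist (b n) b₀ + dist b₀ a₀ := dist_triangle4 _ _ _ _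
    _ < ε := by linarith [hab n, dist_comm a₀ b₀ ▸ hab₀]

lemma MeasureTheory.Integrable.of_bounded_of_eq_zero_off {α : Type*} [MeasurableSpace α]
    {μ : Measure α} {f : α → ℝ} {s : Set α} (hs : μ s ≠ ⊤) (hf : AEStronglyMeasurable f μ) {M : ℝ}
    (hM : ∀ a, ‖f a‖ ≤ M) (h0 : ∀ a ∉ s, f a = 0) : Integrable f μ :=
  (Measure.integrableOn_of_bounded hs hf (ae_of_all _ hM)).integrable_of_forall_notMem_eq_zero h0

lemma norm_integral_mul_sub_integral_mul_le {α : Type*} [MeasurableSpace α] {μ : Measure α}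
    {w g φ : α → ℝ} (hw : Integrable w μ) (hg : Integrable g μ) (hφ : AEStronglyMeasurable φ μ)
    {C : ℝ} (hC : ∀ x, ‖φ x‖ ≤ C) :
    ‖∫ x, w x * φ x ∂μ - ∫ x, g x * φ x ∂μ‖ ≤ C * ∫ x, ‖w x - g x‖ ∂μ := by
  rw [← integral_sub (hw.mul_bdd hφ (ae_of_all _ hC)) (hg.mul_bdd hφ (ae_of_all _ hC)),
    ← integral_const_mul]
  refine norm_integral_le_of_norm_le ((hw.sub hg).norm.const_mul C) (ae_of_all _ fun x => ?_)
  rw [← sub_mul, norm_mul, mul_comm]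
  exact mul_le_mul_of_nonneg_right (hC x) (norm_nonneg _)

lemma apply_eq_zero_of_notMem_image_fst_tsupport {X Y : Type*} [TopologicalSpace X]
    [TopologicalSpace Y] {F : X × Y → ℝ} {x : X} (hx : x ∉ Prod.fst '' tsupport F) (u : Y) :
    F (x, u) = 0 :=
  image_eq_zero_of_notMem_tsupport fun h => hx ⟨_, h, rfl⟩

lemma HasCompactSupport.integrable_comp_prod {X Y T : Type*} [TopologicalSpace X]
    [MeasurableSpace X] [BorelSpace X] [TopologicalSpace Y] [MeasurableSpace Y] [BorelSpace Y]
    [SecondCountableTopology Y] [MeasurableSpace T] {F : X × Y → ℝ} (hF : Continuous F)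
    (hFs : HasCompactSupport F) (μ : Measure X) [IsFiniteMeasureOnCompacts μ]
    (ν : Measure T) [IsFiniteMeasure ν] {ψ : X × T → Y} (hψ : Measurable ψ) :
    Integrable (fun p => F (p.1, ψ p)) (μ.prod ν) := by
  obtain ⟨M, hM⟩ := hFs.exists_bound_of_continuous hF
  have hK := hFs.image continuous_fst
  refine .of_bounded_of_eq_zero_off (s := (Prod.fst '' tsupport F) ×ˢ univ) ?_
    (hF.measurable.comp (measurable_fst.prodMk hψ)).aestronglyMeasurable (fun p => hM _)
    fun p hp => apply_eq_zero_of_notMem_image_fst_tsupport (fun h => hp ⟨h, trivial⟩) _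
  rw [Measure.prod_prod]
  exact ENNReal.mul_ne_top hK.measure_lt_top.ne (measure_ne_top ν univ)

lemma HasCompactSupport.exists_norm_integral_comp_add_sub_le {E Y : Type*}
    [NormedAddCommGroup E] [ProperSpace E] [MeasurableSpace E] [BorelSpace E]
    [TopologicalSpace Y] [MeasurableSpace Y] [BorelSpace Y] [SecondCountableTopology Y]
    {F : E × Y → ℝ} (hF : Continuous F) (hFs : HasCompactSupport F)
    (μ : Measure E) [IsFiniteMeasureOnCompacts μ] :
    ∃ C, 0 ≤ C ∧ ∀ s : E, ‖s‖ ≤ 1 → ∀ η, (∀ x u, ‖F (x + s, u) - F (x, u)‖ ≤ η) →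
      ∀ φ : E → Y, Measurable φ →
        ‖∫ x, F (x + s, φ x) ∂μ - ∫ x, F (x, φ x) ∂μ‖ ≤ η * C := by
  set B := cthickening 1 (Prod.fst '' tsupport F)
  have hB : IsCompact B := (hFs.image continuous_fst).cthickening
  obtain ⟨M, hM⟩ := hFs.exists_bound_of_continuous hF
  refine ⟨μ.real B, measureReal_nonneg, fun s hs η hη φ hφ => ?_⟩
  have hvanish : ∀ s : E, ‖s‖ ≤ 1 → ∀ x ∉ B, ∀ u, F (x + s, u) = 0 := fun s hs x hx u =>
    apply_eq_zero_of_notMem_image_fst_tsupport (fun hxs => hx <|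
      mem_cthickening_of_dist_le _ _ _ _ hxs (by rwa [dist_self_add_right])) u
  have hint : ∀ s : E, ‖s‖ ≤ 1 → Integrable (fun x => F (x + s, φ x)) μ := fun s hs =>
    .of_bounded_of_eq_zero_off hB.measure_lt_top.ne
      (hF.measurable.comp ((measurable_add_const s).prodMk hφ)).aestronglyMeasurable
      (fun x => hM _) fun x hx => hvanish s hs x hx _
  have hint₀ : Integrable (fun x => F (x, φ x)) μ := by simpa using hint 0 (by simp)
  have hbound : ∀ x, ‖F (x + s, φ x) - F (x, φ x)‖ ≤ B.indicator (fun _ => η) x := fun x => by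
    by_cases hx : x ∈ B
    · simpa [hx] using hη x (φ x)
    · simpa [hx, hvanish s hs x hx] using hvanish 0 (by simp) x hx (φ x)
  rw [← integral_sub (hint s hs) hint₀]
  refine (norm_integral_le_of_norm_le ((integrable_indicator_iff hB.measurableSet).2
    (integrableOn_const hB.measure_lt_top.ne)) (ae_of_all _ hbound)).trans_eq ?_
  rw [integral_indicator_const _ hB.measurableSet, smul_eq_mul, mul_comm]

lemma map_restrict_Ico_of_eqOn_const_add {f : ℝ → ℝ} {a p q : ℝ}
    (h : EqOn f (a + ·) (Ico p q)) :
    (volume.restrict (Ico p q)).map f = volume.restrict (Ico (a + p) (a + q)) := by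
  rw [Measure.map_congr (ae_restrict_of_forall_mem measurableSet_Ico h), ← image_const_add_Ico]
  exact ((measurePreserving_add_left volume a).restrict_image_emb
    (measurableEmbedding_addLeft a) _).map_eq

theorem measurePreserving_fract_const_add_Ico (c : ℝ) :
    MeasurePreserving (fun t => Int.fract (c + t)) (volume.restrict (Ico 0 1))
      (volume.restrict (Ico 0 1)) := by
  have hc : ∀ t, Int.fract (c + t) = Int.fract (Int.fract c + t) := fun t => by
    rw [← Int.fract_add_intCast (Int.fract c + t) ⌊c⌋, add_right_comm, Int.fract_add_floor]
  simp_rw [hc]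
  set c' := Int.fract c
  have h0 : 0 ≤ c' := Int.fract_nonneg c
  have h1 : c' < 1 := Int.fract_lt_one c
  have hlow : EqOn (fun t => Int.fract (c' + t)) (c' + ·) (Ico 0 (1 - c')) := fun t ht =>
    Int.fract_eq_self.2 ⟨by linarith [ht.1], by linarith [ht.2]⟩
  have hhigh : EqOn (fun t => Int.fract (c' + t)) (c' - 1 + ·) (Ico (1 - c') 1) := fun t ht => by
    show Int.fract (c' + t) = c' - 1 + t
    rw [← Int.fract_sub_one, Int.fract_eq_self.2 ⟨by linarith [ht.1], by linarith [ht.2]⟩]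
    ring
  refine ⟨by fun_prop, ?_⟩
  calc (volume.restrict (Ico 0 1)).map (fun t => Int.fract (c' + t))
      = (volume.restrict (Ico 0 (1 - c'))).map (fun t => Int.fract (c' + t))
        + (volume.restrict (Ico (1 - c') 1)).map (fun t => Int.fract (c' + t)) := by
        rw [← Measure.map_add _ _ (by fun_prop), ← Measure.restrict_union Ico_disjoint_Ico_same
          measurableSet_Ico, Ico_union_Ico_eq_Ico (by linarith) (by linarith)]
    _ = volume.restrict (Ico c' 1) + volume.restrict (Ico 0 c') := by
        rw [map_restrict_Ico_of_eqOn_const_add hlow, map_restrict_Ico_of_eqOn_const_add hhigh]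
        congr 3 <;> ring
    _ = volume.restrict (Ico 0 1) := by
        rw [add_comm, ← Measure.restrict_union Ico_disjoint_Ico_same measurableSet_Ico,
          Ico_union_Ico_eq_Ico h0 h1.le]

theorem measurePreserving_fract_const_add (c : ℝ) :
    MeasurePreserving (fun t => Int.fract (c + t)) (volume.restrict (Icc 0 1))
      (volume.restrict (Icc 0 1)) := by
  rw [← Measure.restrict_congr_set Ico_ae_eq_Icc]
  exact measurePreserving_fract_const_add_Ico c

section

variable {ι : Type*} [Fintype ι] {F : (ι → ℝ) × (ι → ℝ) → ℝ}

instance : IsProbabilityMeasure ((volume : Measure (ι → ℝ)).restrict (Icc 0 1)) :=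
  ⟨by simp [Real.volume_Icc_pi]⟩

lemma measureReal_Icc_zero_one : volume.real (Icc (0 : ι → ℝ) 1) = 1 := by
  simp [measureReal_def, Real.volume_Icc_pi]

theorem measurePreserving_pi_fract_const_add (c : ι → ℝ) :
    MeasurePreserving (fun (t : ι → ℝ) i => Int.fract (c i + t i)) (volume.restrict (Icc 0 1))
      (volume.restrict (Icc 0 1)) := by
  rw [← pi_univ_Icc, volume_pi, Measure.restrict_pi_pi]
  exact measurePreserving_pi _ _ fun i => measurePreserving_fract_const_add (c i)

theorem setIntegral_comp_fract_const_add (c : ι → ℝ) {h : (ι → ℝ) → ℝ}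
    (hh : AEStronglyMeasurable h (volume.restrict (Icc 0 1))) :
    ∫ t in Icc (0 : ι → ℝ) 1, h (fun i => Int.fract (c i + t i)) =
      ∫ u in Icc (0 : ι → ℝ) 1, h u := by
  have hmp := measurePreserving_pi_fract_const_add c
  rw [← integral_map hmp.aemeasurable (by rwa [hmp.map_eq]), hmp.map_eq]

theorem integral_comp_fract_sub_integral_eq (hF : Continuous F) (hFs : HasCompactSupport F)
    {n : ℕ} (hn : n ≠ 0) :
    (∫ x, F (x, fun i => Int.fract (n * x i))) - ∫ x, ∫ u in Icc (0 : ι → ℝ) 1, F (x, u) =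
      ∫ t in Icc (0 : ι → ℝ) 1, ((∫ x, F (x + (n : ℝ)⁻¹ • t, fun i => Int.fract (n * x i + t i)))
        - ∫ x, F (x, fun i => Int.fract (n * x i + t i))) := by
  have hshift : ∀ t : ι → ℝ, ∫ x, F (x + (n : ℝ)⁻¹ • t, fun i => Int.fract (n * x i + t i)) =
      ∫ x, F (x, fun i => Int.fract (n * x i)) := fun t => by
    rw [← integral_add_right_eq_self (fun x => F (x, fun i => Int.fract (n * x i))) ((n : ℝ)⁻¹ • t)]
    simp [mul_add, hn]
  have hprod := hFs.integrable_comp_prod hF volume (volume.restrict (Icc (0 : ι → ℝ) 1))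
    (ψ := fun p i => Int.fract (n * p.1 i + p.2 i)) (by fun_prop)
  have hswap : ∫ x, ∫ u in Icc (0 : ι → ℝ) 1, F (x, u) =
      ∫ t in Icc (0 : ι → ℝ) 1, ∫ x, F (x, fun i => Int.fract (n * x i + t i)) :=
    calc ∫ x, ∫ u in Icc (0 : ι → ℝ) 1, F (x, u)
        = ∫ x, ∫ t in Icc (0 : ι → ℝ) 1, F (x, fun i => Int.fract (n * x i + t i)) := by
          congr with x
          exact (setIntegral_comp_fract_const_add (fun i => n * x i)
            (hF.comp (Continuous.prodMk_right x)).aestronglyMeasurable).symm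
      _ = _ := integral_integral_swap hprod
  simp only [hshift]
  rw [integral_sub (integrable_const _) hprod.integral_prod_right, hswap]
  simp

theorem tendsto_integral_comp_fract_of_hasCompactSupport (hF : Continuous F)
    (hFs : HasCompactSupport F) :
    Tendsto (fun n : ℕ => ∫ x, F (x, fun i => Int.fract (n * x i))) atTop
      (𝓝 (∫ x, ∫ u in Icc (0 : ι → ℝ) 1, F (x, u))) := by
  obtain ⟨C, hC0, hC⟩ := hFs.exists_norm_integral_comp_add_sub_le hF volume
  rw [Metric.tendsto_nhds]
  intro ε hε
  obtain ⟨δ, hδ, hFδ⟩ := Metric.uniformContinuous_iff.1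
    (hFs.uniformContinuous_of_continuous hF) (ε / (C + 1)) (by positivity)
  filter_upwards [tendsto_inv_atTop_nhds_zero_nat.eventually (gt_mem_nhds (lt_min hδ one_pos)),
    eventually_ne_atTop 0] with n hnδ hn
  have hsmall : ∀ t ∈ Icc (0 : ι → ℝ) 1, ‖(n : ℝ)⁻¹ • t‖ < min δ 1 := fun t ht => by
    refine lt_of_le_of_lt ?_ hnδ
    rw [norm_smul, Real.norm_of_nonneg (by positivity)]
    refine mul_le_of_le_one_right (by positivity) ((pi_norm_le_iff_of_nonneg zero_le_one).2
      fun i => ?_)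
    rw [Real.norm_of_nonneg (ht.1 i)]
    exact ht.2 i
  have hFsmall : ∀ t ∈ Icc (0 : ι → ℝ) 1, ∀ x u,
      ‖F (x + (n : ℝ)⁻¹ • t, u) - F (x, u)‖ ≤ ε / (C + 1) := fun t ht x u => by
    rw [← dist_eq_norm]
    refine (hFδ ?_).le
    simpa [Prod.dist_eq, dist_eq_norm] using (hsmall t ht).trans_le (min_le_left _ _)
  rw [dist_eq_norm, integral_comp_fract_sub_integral_eq hF hFs hn]
  calc _ ≤ ε / (C + 1) * C * volume.real (Icc (0 : ι → ℝ) 1) :=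
        norm_setIntegral_le_of_norm_le_const isCompact_Icc.measure_lt_top fun t ht =>
          hC _ ((hsmall t ht).le.trans (min_le_right _ _)) _ (hFsmall t ht) _ (by fun_prop)
    _ < ε := by
        rw [measureReal_Icc_zero_one, mul_one, div_mul_eq_mul_div, div_lt_iff₀ (by positivity)]
        nlinarith

theorem tendsto_integral_mul_comp_fract_of_hasCompactSupport {f : (ι → ℝ) → (ι → ℝ) → ℝ}
    (hf : Continuous fun z : (ι → ℝ) × (ι → ℝ) => f z.1 z.2) {g : (ι → ℝ) → ℝ}
    (hg : Continuous g) (hgs : HasCompactSupport g) :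
    Tendsto (fun n : ℕ => ∫ x, g x * f x (fun i => Int.fract (n * x i))) atTop
      (𝓝 (∫ x, g x * ∫ u in Icc (0 : ι → ℝ) 1, f x u)) := by
  -- `χ = 1` on the cube, where the fractional parts live, so it changes neither side
  obtain ⟨χ, hχ, -, hχs, -⟩ := exists_continuous_one_zero_of_isCompact
    (isCompact_Icc (a := (0 : ι → ℝ)) (b := 1)) isClosed_empty (disjoint_empty _)
  have hFs : HasCompactSupport fun p : (ι → ℝ) × (ι → ℝ) => g p.1 * χ p.2 * f p.1 p.2 :=
    HasCompactSupport.intro (hgs.prod hχs) fun p hp => by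
      rcases not_and_or.1 hp with h | h <;> simp [image_eq_zero_of_notMem_tsupport h]
  have hfract : ∀ (n : ℕ) (x : ι → ℝ), χ (fun i => Int.fract (n * x i)) = 1 := fun n x =>
    hχ ⟨fun i => Int.fract_nonneg _, fun i => (Int.fract_lt_one _).le⟩
  convert tendsto_integral_comp_fract_of_hasCompactSupport (by fun_prop) hFs using 2 with n
  · simp [hfract]
  · congr with x
    rw [← integral_const_mul]
    refine setIntegral_congr_fun measurableSet_Icc fun u hu => ?_
    simp [hχ hu]

theorem tendsto_integral_mul_comp_fract {f : (ι → ℝ) → (ι → ℝ) → ℝ}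
    (hf : Continuous fun z : (ι → ℝ) × (ι → ℝ) => f z.1 z.2) (hfb : ∃ C, ∀ x y, |f x y| ≤ C)
    {w : (ι → ℝ) → ℝ} (hw : Integrable w) :
    Tendsto (fun n : ℕ => ∫ x, w x * f x (fun i => Int.fract (n * x i))) atTop
      (𝓝 (∫ x, w x * ∫ u in Icc (0 : ι → ℝ) 1, f x u)) := by
  obtain ⟨C, hC⟩ := hfb
  have hC0 : 0 ≤ C := (abs_nonneg _).trans (hC 0 0)
  have hφ : ∀ n : ℕ, AEStronglyMeasurable (fun x => f x fun i => Int.fract (n * x i)) volume :=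
    fun n => (hf.measurable.comp (measurable_id.prodMk (by fun_prop))).aestronglyMeasurable
  have hΦ : AEStronglyMeasurable (fun x => ∫ u in Icc (0 : ι → ℝ) 1, f x u) volume :=
    (hf.stronglyMeasurable.integral_prod_right (f := f)).aestronglyMeasurable
  have hΦC : ∀ x, ‖∫ u in Icc (0 : ι → ℝ) 1, f x u‖ ≤ C := fun x => by
    simpa [measureReal_Icc_zero_one] using norm_setIntegral_le_of_norm_le_const (μ := volume)
      isCompact_Icc.measure_lt_top fun u (_ : u ∈ Icc (0 : ι → ℝ) 1) =>
        (Real.norm_eq_abs _).trans_le (hC x u)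
  refine tendsto_of_forall_dist_le fun ε hε => ?_
  obtain ⟨g, hgs, hwg, hg, hgi⟩ := hw.exists_hasCompactSupport_integral_sub_le
    (ε := ε / (C + 1)) (by positivity)
  have hCε : C * ∫ x, ‖w x - g x‖ ≤ ε := by
    calc C * ∫ x, ‖w x - g x‖ ≤ C * (ε / (C + 1)) := by gcongr
      _ ≤ ε := by
        rw [mul_div_assoc', div_le_iff₀ (by positivity)]
        nlinarith
  refine ⟨_, _, tendsto_integral_mul_comp_fract_of_hasCompactSupport hf hg hgs, fun n => ?_, ?_⟩
  · rw [dist_eq_norm]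
    exact (norm_integral_mul_sub_integral_mul_le hw hgi (hφ n)
      fun x => (Real.norm_eq_abs _).trans_le (hC _ _)).trans hCε
  · rw [dist_eq_norm]
    exact (norm_integral_mul_sub_integral_mul_le hw hgi hΦ hΦC).trans hCε

theorem tendsto_integral_comp_fract_of_absolutelyContinuous {μ : Measure (ι → ℝ)}
    [IsFiniteMeasure μ] (hμ : μ ≪ volume) {f : (ι → ℝ) → (ι → ℝ) → ℝ}
    (hf : Continuous fun z : (ι → ℝ) × (ι → ℝ) => f z.1 z.2) (hfb : ∃ C, ∀ x y, |f x y| ≤ C) :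
    Tendsto (fun n : ℕ => ∫ x, f x (fun i => Int.fract (n * x i)) ∂μ) atTop
      (𝓝 (∫ x, (∫ u in Icc (0 : ι → ℝ) 1, f x u) ∂μ)) := by
  simp_rw [← integral_toReal_rnDeriv_mul hμ]
  exact tendsto_integral_mul_comp_fract hf hfb Measure.integrable_toReal_rnDeriv

end

theorem stmt4_general (d : ℕ)
    {Ω : Type*} [MeasureSpace Ω] [IsProbabilityMeasure (ℙ : Measure Ω)]
    (V : Ω → (Fin d → ℝ)) (hV : Measurable V)
    (v : (Fin d → ℝ) → ℝ)
    (hdens : Measure.map V (ℙ : Measure Ω) = volume.withDensity (fun x => ENNReal.ofReal (v x))) :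
    ∀ f : (Fin d → ℝ) → (Fin d → ℝ) → ℝ,
      Continuous (fun z : (Fin d → ℝ) × (Fin d → ℝ) => f z.1 z.2) →
      (∃ C : ℝ, ∀ x y, |f x y| ≤ C) →
      Filter.Tendsto (fun n : ℕ => ∫ ω, f (V ω) (fun i => Int.fract ((n:ℝ) * V ω i)))
        Filter.atTop
        (nhds (∫ ω, ∫ u in Set.Icc (0 : Fin d → ℝ) 1, f (V ω) u)) := by
  intro f hf hfb
  have hlaw : Measure.map V ℙ ≪ volume := hdens ▸ withDensity_absolutelyContinuous _ _
  have := Measure.isProbabilityMeasure_map (μ := ℙ) hV.aemeasurable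
  convert tendsto_integral_comp_fract_of_absolutelyContinuous hlaw hf hfb using 2 with n
  · have hfract : Measurable fun x : Fin d → ℝ => fun i => Int.fract ((n : ℝ) * x i) := by
      fun_prop
    exact (integral_map hV.aemeasurable
      (hf.measurable.comp (measurable_id.prodMk hfract)).aestronglyMeasurable).symm
  · exact (integral_map hV.aemeasurable
      (hf.stronglyMeasurable.integral_prod_right (f := f)).aestronglyMeasurable).symm

theorem stmt4 (d : ℕ) (hd : 1 ≤ d)
    {Ω : Type*} [MeasureSpace Ω] [IsProbabilityMeasure (ℙ : Measure Ω)]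
    (V : Ω → (Fin d → ℝ)) (hV : Measurable V)
    (v : (Fin d → ℝ) → ℝ) (A : Set (Fin d → ℝ))
    (hA : IsOpen A) (hconv : Convex ℝ A)
    (hv1 : ContDiffOn ℝ 1 v A)
    (hv0 : ∀ x ∉ A, v x = 0)
    (hdens : Measure.map V (ℙ : Measure Ω) = volume.withDensity (fun x => ENNReal.ofReal (v x))) :
    ∀ f : (Fin d → ℝ) → (Fin d → ℝ) → ℝ,
      Continuous (fun z : (Fin d → ℝ) × (Fin d → ℝ) => f z.1 z.2) →
      (∃ C : ℝ, ∀ x y, |f x y| ≤ C) →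
      Filter.Tendsto (fun n : ℕ => ∫ ω, f (V ω) (fun i => Int.fract ((n:ℝ) * V ω i)))
        Filter.atTop
        (nhds (∫ ω, ∫ u in Set.Icc (0 : Fin d → ℝ) 1, f (V ω) u)) :=
  stmt4_general d V hV v hdens
end

section
/- Let f, v be as follows: v : ℝ^d → ℝ_+ is a C^1 probability density vanishing outside an open convex set A, and f : ℝ^d × ℝ^d → ℝ is a C^1 function vanishing outside some closed ball contained in A × ℝ^d. Then for every ρ > 0, | ∫_{ℝ^d} f(x, {x/ρ}) v(x) dx − ∫_{ℝ^d} (∫_{[0,1]^d} f(x,u) du) v(x) dx | ≤ K ρ for a constant K independent of ρ. -/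
/-!
Put `φ(x, u) = f(x, u) v(x)`: it is `C¹` with compact support, hence bounded and `L`-Lipschitz,
and vanishes unless `x` lies in a ball `B`. The substitution `x = ρ y` turns the difference into
`ρ^d` times the same difference at scale `1` for `ψ(y, u) = φ(ρ y, u)`, whose oscillation in `y`
over a unit cube is at most `L ρ`. Tile `ℝ^d` by the cubes `n + [0,1)^d`, `n ∈ ℤ^d`. On such a cube
`{y} = y - n`, so the cube contributes `∫∫ (ψ(n + u, u) - ψ(n + y, u)) du dy`; the integrand
vanishes unless `n + y` or `n + u` lies in `ρ⁻¹ B`, so the contribution is at most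
`2 L ρ |ρ⁻¹ B ∩ (n + [0,1)^d)|`. Summing over `n` gives the bound `2 L |B| ρ`.
-/
open MeasureTheory Set Pointwise

theorem abs_integral_diag_sub_integral_le {α : Type*} [MeasurableSpace α]
    {μ : Measure α} [IsProbabilityMeasure μ] {s S : Set α} (hs : ∀ᵐ x ∂μ, x ∈ s)
    (hS : MeasurableSet S) {h : α × α → ℝ} (hh : Measurable h) {M C : ℝ}
    (hM : ∀ z, ‖h z‖ ≤ M) (hsupp : ∀ y ∉ S, ∀ u, h (y, u) = 0)
    (hosc : ∀ y ∈ s, ∀ y' ∈ s, ∀ u, |h (y, u) - h (y', u)| ≤ C) :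
    |∫ y, (h (y, y) - ∫ u, h (y, u) ∂μ) ∂μ| ≤ 2 * C * μ.real S := by
  have hdiag : Integrable (fun u => h (u, u)) μ :=
    .of_bound (hh.comp (measurable_id.prodMk measurable_id)).aestronglyMeasurable M
      (.of_forall fun _ => hM _)
  set χ := S.indicator fun _ => C
  have hχ : Integrable χ μ := (integrable_const C).indicator hS
  have hχint : ∫ u, χ u ∂μ = C * μ.real S := by
    rw [integral_indicator_const _ hS, smul_eq_mul, mul_comm]
  obtain ⟨y₀, hy₀⟩ := hs.exists
  have hC : 0 ≤ C := by simpa using hosc y₀ hy₀ y₀ hy₀ y₀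
  have hχ0 : 0 ≤ χ := indicator_nonneg fun _ _ => hC
  have hpt : ∀ y ∈ s, ∀ u ∈ s, |h (u, u) - h (y, u)| ≤ χ y + χ u := by
    intro y hy u hu
    by_cases hyS : y ∈ S
    · grw [← hχ0 u]
      simpa [χ, hyS] using hosc u hu y hy u
    by_cases huS : u ∈ S
    · grw [← hχ0 y]
      simpa [χ, huS] using hosc u hu y hy u
    simp [hsupp y hyS, hsupp u huS, χ, hyS, huS]
  have hinner : ∀ y ∈ s, ‖∫ u, h (u, u) ∂μ - ∫ u, h (y, u) ∂μ‖ ≤ χ y + C * μ.real S := by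
    intro y hy
    calc ‖∫ u, h (u, u) ∂μ - ∫ u, h (y, u) ∂μ‖ = ‖∫ u, (h (u, u) - h (y, u)) ∂μ‖ := by
          rw [integral_sub hdiag (.of_bound (f := fun u => h (y, u))
            (hh.comp measurable_prodMk_left).aestronglyMeasurable M (.of_forall fun _ => hM _))]
      _ ≤ ∫ u, (χ y + χ u) ∂μ := by
          refine norm_integral_le_of_norm_le ((integrable_const _).add hχ) ?_
          filter_upwards [hs] with u hu using hpt y hy u hu
      _ = χ y + C * μ.real S := by
          rw [integral_add (integrable_const _) hχ, integral_const, probReal_univ, one_smul, hχint]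
  have hsec : Integrable (fun y => ∫ u, h (y, u) ∂μ) μ :=
    (Integrable.of_bound hh.aestronglyMeasurable M (.of_forall hM)).integral_prod_left
  calc |∫ y, (h (y, y) - ∫ u, h (y, u) ∂μ) ∂μ|
      = ‖∫ y, (∫ u, h (u, u) ∂μ - ∫ u, h (y, u) ∂μ) ∂μ‖ := by
        rw [integral_sub hdiag hsec, integral_sub (integrable_const _) hsec, integral_const,
          probReal_univ, one_smul, Real.norm_eq_abs]
    _ ≤ ∫ y, (χ y + C * μ.real S) ∂μ := by
        refine norm_integral_le_of_norm_le (hχ.add (integrable_const _)) ?_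
        filter_upwards [hs] with y hy using hinner y hy
    _ = 2 * C * μ.real S := by
        rw [integral_add hχ (integrable_const _), hχint, integral_const, probReal_univ, one_smul]
        ring

section UnitCube

variable {ι : Type*} [Fintype ι]

theorem volume_fundamentalDomain_pi_basisFun :
    volume (ZSpan.fundamentalDomain (Pi.basisFun ℝ ι)) = 1 := by
  simp [ZSpan.fundamentalDomain_pi_basisFun, volume_pi_pi, Real.volume_Ico]

theorem fundamentalDomain_pi_basisFun_ae_eq_Icc :
    ZSpan.fundamentalDomain (Pi.basisFun ℝ ι) =ᵐ[volume] Icc (0 : ι → ℝ) 1 := by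
  rw [ZSpan.fundamentalDomain_pi_basisFun, volume_pi]
  exact Measure.univ_pi_Ico_ae_eq_Icc (f := 0) (g := 1)

theorem ZSpan.fract_pi_basisFun (y : ι → ℝ) :
    ZSpan.fract (Pi.basisFun ℝ ι) y = fun i => Int.fract (y i) := by
  ext i
  exact ZSpan.repr_fract_apply (Pi.basisFun ℝ ι) y i

theorem dist_lt_one_of_mem_fundamentalDomain_pi_basisFun {y y' : ι → ℝ}
    (hy : y ∈ ZSpan.fundamentalDomain (Pi.basisFun ℝ ι))
    (hy' : y' ∈ ZSpan.fundamentalDomain (Pi.basisFun ℝ ι)) : dist y y' < 1 := by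
  rw [ZSpan.fundamentalDomain_pi_basisFun] at hy hy'
  refine (dist_pi_lt_iff one_pos).2 fun i => ?_
  have hi := hy i (mem_univ i)
  have hi' := hy' i (mem_univ i)
  rw [Real.dist_eq, abs_sub_lt_iff]
  constructor <;> linarith [hi.1, hi.2, hi'.1, hi'.2]

theorem abs_integral_fract_sub_integral_Icc_le {φ : (ι → ℝ) × (ι → ℝ) → ℝ} (hφ : Measurable φ)
    {M C : ℝ} (hM : ∀ z, ‖φ z‖ ≤ M) {T : Set (ι → ℝ)} (hT : MeasurableSet T)
    (hTfin : volume T ≠ ⊤) (hsupp : ∀ y ∉ T, ∀ u, φ (y, u) = 0)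
    (hosc : ∀ y y' u, dist y y' < 1 → |φ (y, u) - φ (y', u)| ≤ C) :
    |(∫ y, φ (y, fun i => Int.fract (y i))) - ∫ y, ∫ u in Icc 0 1, φ (y, u)| ≤
      2 * C * volume.real T := by
  simp_rw [← Measure.restrict_congr_set fundamentalDomain_pi_basisFun_ae_eq_Icc]
  set b := Pi.basisFun ℝ ι
  set F := ZSpan.fundamentalDomain b
  have hF : MeasurableSet F := ZSpan.fundamentalDomain_measurableSet b
  have hFvol : volume F = 1 := volume_fundamentalDomain_pi_basisFun
  have hFD := ZSpan.isAddFundamentalDomain' b volume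
  have : Countable (Submodule.span ℤ (range b)).toAddSubgroup :=
    inferInstanceAs (Countable (Submodule.span ℤ (range b)))
  have : IsProbabilityMeasure (volume.restrict F) :=
    ⟨by rw [Measure.restrict_apply_univ, hFvol]⟩
  have hint : ∀ {f : (ι → ℝ) → ℝ}, AEStronglyMeasurable f → (∀ y, ‖f y‖ ≤ M) →
      (∀ y ∉ T, f y = 0) → Integrable f := fun hf hfM hfT =>
    (Measure.integrableOn_of_bounded hTfin hf (.of_forall hfM)).integrable_of_forall_notMem_eq_zero
      hfT
  have hint₁ : Integrable fun y => φ (y, fun i => Int.fract (y i)) :=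
    hint (hφ.comp (measurable_id.prodMk (measurable_pi_lambda _ fun i =>
      measurable_fract.comp (measurable_pi_apply i)))).aestronglyMeasurable
      (fun _ => hM _) fun y hy => hsupp y hy _
  have hint₂ : Integrable fun y => ∫ u in F, φ (y, u) := by
    refine hint (hφ.stronglyMeasurable.integral_prod_right').aestronglyMeasurable
      (fun y => ?_) fun y hy => by simp [hsupp y hy]
    simpa using norm_integral_le_of_norm_le_const (μ := volume.restrict F)
      (.of_forall fun u => hM (y, u))
  rw [← integral_sub hint₁ hint₂, hFD.integral_eq_tsum'
    (fun y => φ (y, fun i => Int.fract (y i)) - ∫ u in F, φ (y, u)) (hint₁.sub hint₂)]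
  have hcube : ∀ n : (Submodule.span ℤ (range b)).toAddSubgroup,
      ‖∫ y in F, (φ (-n +ᵥ y, fun i => Int.fract ((-n +ᵥ y) i)) - ∫ u in F, φ (-n +ᵥ y, u))‖ ≤
        2 * C * volume.real ((n +ᵥ T) ∩ F) := by
    intro n
    have hfract : ∀ y ∈ F, (fun i => Int.fract ((-n +ᵥ y) i)) = y := fun y hy => by
      rw [← ZSpan.fract_pi_basisFun]
      exact (ZSpan.fract_zSpan_add b y (-n).2).trans (ZSpan.fract_eq_self.2 hy)
    have hS : MeasurableSet (n +ᵥ T) := hT.const_vadd _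
    rw [setIntegral_congr_fun hF fun y hy => by rw [hfract y hy], ← measureReal_restrict_apply hS]
    refine abs_integral_diag_sub_integral_le (ae_restrict_mem hF) hS
      (h := fun p => φ (-n +ᵥ p.1, p.2)) (by fun_prop) (fun _ => hM _) (fun y hy u => ?_)
      fun y hy y' hy' u => hosc _ _ u ?_
    · exact hsupp _ (fun h => hy (mem_vadd_set_iff_neg_vadd_mem.2 h)) u
    · exact (dist_add_left _ _ _).trans_lt (dist_lt_one_of_mem_fundamentalDomain_pi_basisFun hy hy')
  have hsum : HasSum (fun n : (Submodule.span ℤ (range b)).toAddSubgroup =>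
      2 * C * volume.real ((n +ᵥ T) ∩ F)) (2 * C * volume.real T) := by
    have hdecomp := hFD.measure_eq_tsum T
    have h := ENNReal.hasSum_toReal (hdecomp ▸ hTfin)
    rw [← ENNReal.tsum_toReal_eq fun n => ne_top_of_le_ne_top (hFvol ▸ ENNReal.one_ne_top)
      (measure_mono inter_subset_right), ← hdecomp] at h
    simpa only [measureReal_def] using h.mul_left (2 * C)
  exact tsum_of_norm_bounded hsum hcube

open NNReal in
theorem abs_integral_fract_div_sub_integral_Icc_le {φ : (ι → ℝ) × (ι → ℝ) → ℝ} {L : ℝ≥0}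
    (hφ : LipschitzWith L φ) {M : ℝ} (hM : ∀ z, ‖φ z‖ ≤ M) {B : Set (ι → ℝ)}
    (hB : MeasurableSet B) (hBfin : volume B ≠ ⊤) (hsupp : ∀ x ∉ B, ∀ u, φ (x, u) = 0) {ρ : ℝ}
    (hρ : 0 < ρ) :
    |(∫ x, φ (x, fun i => Int.fract (x i / ρ))) - ∫ x, ∫ u in Icc 0 1, φ (x, u)| ≤
      2 * L * volume.real B * ρ := by
  have hρd : ρ ^ Fintype.card ι ≠ 0 := by positivity
  have hscale : ∀ g : (ι → ℝ) → ℝ, ∫ x, g x = ρ ^ Fintype.card ι * ∫ y, g (ρ • y) := fun g => by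
    rw [Measure.integral_comp_smul_of_nonneg volume g ρ (hR := hρ.le),
      Module.finrank_fintype_fun_eq_card, smul_eq_mul, ← mul_assoc, mul_inv_cancel₀ hρd, one_mul]
  have hT : volume.real ((ρ • ·) ⁻¹' B) = (ρ ^ Fintype.card ι)⁻¹ * volume.real B := by
    rw [measureReal_def, Measure.addHaar_preimage_smul volume hρ.ne',
      Module.finrank_fintype_fun_eq_card, ENNReal.toReal_mul, ENNReal.toReal_ofReal (abs_nonneg _),
      abs_of_pos (by positivity), measureReal_def]
  have hosc : ∀ y y' u, dist y y' < 1 → |φ (ρ • y, u) - φ (ρ • y', u)| ≤ L * ρ := by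
    intro y y' u hyy'
    rw [← Real.dist_eq]
    calc dist (φ (ρ • y, u)) (φ (ρ • y', u)) ≤ L * dist (ρ • y, u) (ρ • y', u) := hφ.dist_le_mul _ _
      _ = L * (ρ * dist y y') := by
        rw [Prod.dist_eq, dist_self, dist_smul₀, Real.norm_of_nonneg hρ.le,
          max_eq_left (by positivity)]
      _ ≤ L * ρ := by gcongr; exact mul_le_of_le_one_right hρ.le hyy'.le
  have hunit := abs_integral_fract_sub_integral_Icc_le (φ := fun p => φ (ρ • p.1, p.2))
    (hφ.continuous.comp (by fun_prop)).measurable (fun _ => hM _)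
    (hB.preimage (measurable_const_smul ρ))
    (by rw [Measure.addHaar_preimage_smul volume hρ.ne']; exact ENNReal.mul_ne_top (by simp) hBfin)
    (fun y hy u => hsupp _ hy u) hosc
  rw [hscale, hscale (fun x => ∫ u in Icc 0 1, φ (x, u)), ← mul_sub, abs_mul,
    abs_of_pos (by positivity)]
  simp only [Pi.smul_apply, smul_eq_mul, mul_div_cancel_left₀ _ hρ.ne']
  calc _ ≤ ρ ^ Fintype.card ι * (2 * (L * ρ) * volume.real ((ρ • ·) ⁻¹' B)) := by gcongr
    _ = 2 * L * volume.real B * ρ := by rw [hT]; field_simp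

end UnitCube

theorem ContDiff.mul_of_tsupport_subset {𝕜 E : Type*} [NontriviallyNormedField 𝕜]
    [NormedAddCommGroup E] [NormedSpace 𝕜 E] {n : WithTop ℕ∞} {f g : E → 𝕜} {U : Set E}
    (hf : ContDiff 𝕜 n f) (hg : ContDiffOn 𝕜 n g U) (hU : IsOpen U) (hfU : tsupport f ⊆ U) :
    ContDiff 𝕜 n (f * g) := by
  refine contDiff_of_contDiffOn_union_of_isOpen (hf.contDiffOn.mul hg)
    (contDiffOn_const (c := 0) |>.congr fun x hx => ?_) ?_ hU (isClosed_tsupport f).isOpen_compl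
  · simp [image_eq_zero_of_notMem_tsupport hx]
  · exact compl_subset_iff_union.mp (compl_subset_compl.mpr hfU)

theorem stmt5_general (d : ℕ)
    (v : (Fin d → ℝ) → ℝ) (A : Set (Fin d → ℝ))
    (hA : IsOpen A)
    (hv1 : ContDiffOn ℝ 1 v A)
    (f : (Fin d → ℝ) × (Fin d → ℝ) → ℝ) (hf : ContDiff ℝ 1 f)
    (c : (Fin d → ℝ) × (Fin d → ℝ)) (r : ℝ)
    (hball : Metric.closedBall c r ⊆ A ×ˢ (Set.univ : Set (Fin d → ℝ)))
    (hsupp : ∀ z ∉ Metric.closedBall c r, f z = 0) :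
    ∃ K : ℝ, ∀ ρ : ℝ, 0 < ρ →
      |(∫ x, f (x, fun i => Int.fract (x i / ρ)) * v x) -
        ∫ x, (∫ u in Set.Icc (0 : Fin d → ℝ) 1, f (x, u)) * v x| ≤ K * ρ := by
  set φ : (Fin d → ℝ) × (Fin d → ℝ) → ℝ := f * (v ∘ Prod.fst)
  have hφ0 : ∀ z ∉ Metric.closedBall c r, φ z = 0 := fun z hz => by simp [φ, hsupp z hz]
  have hftsupp : tsupport f ⊆ A ×ˢ univ :=
    (closure_minimal (fun z hz => by_contra fun h => Function.mem_support.1 hz (hsupp z h))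
      Metric.isClosed_closedBall).trans hball
  have hφ : ContDiff ℝ 1 φ := hf.mul_of_tsupport_subset
    (hv1.comp contDiff_fst.contDiffOn fun _ hz => hz.1) (hA.prod isOpen_univ) hftsupp
  have hφc : HasCompactSupport φ := .intro (isCompact_closedBall c r) hφ0
  obtain ⟨L, hL⟩ := hφ.lipschitzWith_of_hasCompactSupport hφc one_ne_zero
  obtain ⟨M, hM⟩ := hφc.exists_bound_of_continuous hφ.continuous
  refine ⟨2 * L * volume.real (Metric.closedBall c.1 r), fun ρ hρ => ?_⟩
  simp_rw [← integral_mul_const]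
  have hφB : ∀ x ∉ Metric.closedBall c.1 r, ∀ u, φ (x, u) = 0 := fun x hx u => hφ0 _ fun h =>
    hx (Metric.mem_closedBall.2 ((le_max_left _ _).trans (Metric.mem_closedBall.1 h)))
  exact abs_integral_fract_div_sub_integral_Icc_le hL hM Metric.isClosed_closedBall.measurableSet
    measure_closedBall_lt_top.ne hφB hρ

theorem stmt5 (d : ℕ) (hd : 1 ≤ d)
    (v : (Fin d → ℝ) → ℝ) (A : Set (Fin d → ℝ))
    (hA : IsOpen A) (hconv : Convex ℝ A)
    (hv1 : ContDiffOn ℝ 1 v A) (hv0 : ∀ x ∉ A, v x = 0)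
    (hvpos : ∀ x, 0 ≤ v x) (hvint : ∫ x, v x = 1)
    (f : (Fin d → ℝ) × (Fin d → ℝ) → ℝ) (hf : ContDiff ℝ 1 f)
    (c : (Fin d → ℝ) × (Fin d → ℝ)) (r : ℝ)
    (hball : Metric.closedBall c r ⊆ A ×ˢ (Set.univ : Set (Fin d → ℝ)))
    (hsupp : ∀ z ∉ Metric.closedBall c r, f z = 0) :
    ∃ K : ℝ, ∀ ρ : ℝ, 0 < ρ →
      |(∫ x, f (x, fun i => Int.fract (x i / ρ)) * v x) -
        ∫ x, (∫ u in Set.Icc (0 : Fin d → ℝ) 1, f (x, u)) * v x| ≤ K * ρ :=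
  stmt5_general d v A hA hv1 f hf c r hball hsupp
end

section
/- Let p ∈ (0,1), β ∈ (0,2), ε > 0, and Φ_ρ as above. Then for any r ∈ [p,2] and any ρ_1, ρ_2 ≥ ε there exists a constant K = K(ε,p,β,r) such that |Φ_{ρ_1}(x) − Φ_{ρ_2}(x)| ≤ K |ρ_1^β − ρ_2^β| · |x|^r for all x ∈ ℝ. -/
/-!
With `bᵢ = ρᵢ ^ β ≥ ε ^ β`, the two integrands differ by
`(1 - cos (u x)) (exp (-b₁ |u|^β) - exp (-b₂ |u|^β)) |u|^(-1-p)`.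
The mean value bound for `exp` on `(-∞, -ε^β |u|^β]` bounds the middle factor by
`|b₁ - b₂| |u|^β exp (-ε^β |u|^β)`, and interpolating `1 - cos t ≤ min (t²/2, 2)` gives
`1 - cos (u x) ≤ 2 |u|^r |x|^r`. What remains is the weight `|u|^(r+β-1-p) exp (-ε^β |u|^β)`,
integrable at `0` because `r + β - p > 0` and at infinity because of the stretched exponential.
-/

open Real MeasureTheory Set

lemma one_sub_cos_le_two_mul_abs_rpow {r : ℝ} (hr0 : 0 ≤ r) (hr2 : r ≤ 2) (t : ℝ) :
    1 - cos t ≤ 2 * |t| ^ r := by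
  rcases le_or_gt |t| 1 with ht | ht
  · calc 1 - cos t ≤ |t| ^ (2 : ℝ) := by
          rw [rpow_two, sq_abs]; nlinarith [one_sub_sq_div_two_le_cos (x := t)]
      _ ≤ |t| ^ r := rpow_le_rpow_of_exponent_ge' (abs_nonneg t) ht hr0 hr2
      _ ≤ 2 * |t| ^ r := by linarith [rpow_nonneg (abs_nonneg t) r]
  · nlinarith [one_le_rpow ht.le hr0, neg_one_le_cos t]

lemma abs_exp_neg_mul_sub_exp_neg_mul_le {c b₁ b₂ y : ℝ} (h₁ : c ≤ b₁) (h₂ : c ≤ b₂)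
    (hy : 0 ≤ y) : |exp (-(b₁ * y)) - exp (-(b₂ * y))| ≤ |b₁ - b₂| * y * exp (-(c * y)) := by
  wlog h : b₂ ≤ b₁ generalizing b₁ b₂
  · rw [abs_sub_comm, abs_sub_comm b₁]; exact this h₂ h₁ (le_of_not_ge h)
  have hsplit : exp (-(b₁ * y)) = exp (-(b₂ * y)) * exp (-((b₁ - b₂) * y)) := by
    rw [← exp_add]; ring_nf
  have hlin := add_one_le_exp (-((b₁ - b₂) * y))
  have hdecay : exp (-(b₂ * y)) ≤ exp (-(c * y)) := exp_le_exp.2 (by nlinarith)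
  have hmono : exp (-(b₁ * y)) ≤ exp (-(b₂ * y)) := exp_le_exp.2 (by nlinarith)
  rw [abs_of_nonpos (sub_nonpos.2 hmono), abs_of_nonneg (sub_nonneg.2 h)]
  nlinarith [exp_pos (-(b₂ * y)), mul_nonneg (sub_nonneg.2 h) hy]

lemma integrable_comp_abs_of_integrableOn_Ioi {E : Type*} [NormedAddCommGroup E] {f : ℝ → E}
    (hf : IntegrableOn f (Ioi 0)) : Integrable fun x => f |x| := by
  have hIoi : IntegrableOn (fun x => f |x|) (Ioi 0) :=
    hf.congr_fun (fun x hx => by rw [abs_of_pos (mem_Ioi.1 hx)]) measurableSet_Ioi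
  have hIic : IntegrableOn (fun x => f |x|) (Iic 0) := by
    have hneg : MeasurableEmbedding fun x : ℝ => -x := (Homeomorph.neg ℝ).measurableEmbedding
    rw [← Measure.map_neg_eq_self (volume : Measure ℝ), hneg.integrableOn_map_iff]
    simp_rw [Function.comp_def, abs_neg, neg_preimage, neg_Iic, neg_zero]
    exact Iff.mpr integrableOn_Ici_iff_integrableOn_Ioi hIoi
  rw [← integrableOn_univ, ← Iic_union_Ioi (a := (0 : ℝ))]
  exact hIic.union hIoi

lemma integrable_abs_rpow_mul_exp_neg_mul_abs_rpow {s β b : ℝ} (hs : -1 < s) (hβ : 0 < β)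
    (hb : 0 < b) : Integrable fun u : ℝ => |u| ^ s * exp (-(b * |u| ^ β)) := by
  have h := integrableOn_rpow_mul_exp_neg_mul_rpow hs hβ hb
  simp_rw [neg_mul] at h
  exact integrable_comp_abs_of_integrableOn_Ioi (f := fun x => x ^ s * exp (-(b * x ^ β))) h

lemma abs_one_sub_cos_mul_mul_rpow_le {p s u : ℝ} (hs0 : 0 ≤ s) (hs2 : s ≤ 2) (hu : u ≠ 0)
    (x w : ℝ) :
    |(1 - cos (u * x)) * w * |u| ^ (-1 - p)| ≤ 2 * |x| ^ s * (|w| * |u| ^ (s - 1 - p)) := by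
  have hcos : 1 - cos (u * x) ≤ 2 * |x| ^ s * |u| ^ s := by
    have h := one_sub_cos_le_two_mul_abs_rpow hs0 hs2 (u * x)
    rwa [abs_mul, mul_rpow (abs_nonneg u) (abs_nonneg x), mul_comm (|u| ^ s), ← mul_assoc] at h
  have hpow : |u| ^ s * |u| ^ (-1 - p) = |u| ^ (s - 1 - p) := by
    rw [← rpow_add (abs_pos.2 hu)]; congr 1; ring
  rw [abs_mul, abs_mul, abs_of_nonneg (sub_nonneg.2 (cos_le_one _)),
    abs_of_nonneg (rpow_nonneg (abs_nonneg u) _)]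
  calc _ ≤ 2 * |x| ^ s * |u| ^ s * |w| * |u| ^ (-1 - p) := by gcongr
    _ = _ := by rw [← hpow]; ring

lemma integrable_one_sub_cos_mul_exp_neg_mul_abs_rpow {p β b : ℝ} (hp : p < 2) (hβ : 0 < β)
    (hb : 0 < b) (x : ℝ) :
    Integrable fun u : ℝ => (1 - cos (u * x)) * exp (-(b * |u| ^ β)) * |u| ^ (-1 - p) := by
  refine ((integrable_abs_rpow_mul_exp_neg_mul_abs_rpow (s := 2 - 1 - p) (by linarith) hβ
    hb).const_mul (2 * |x| ^ (2 : ℝ))).mono' (by fun_prop) ?_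
  filter_upwards [Measure.ae_ne volume 0] with u hu
  rw [Real.norm_eq_abs, mul_comm (|u| ^ _)]
  simpa only [abs_of_pos (exp_pos _)] using
    abs_one_sub_cos_mul_mul_rpow_le zero_le_two le_rfl hu x (exp (-(b * |u| ^ β)))

lemma abs_integrand_sub_integrand_le {p β c b₁ b₂ r u : ℝ} (hr0 : 0 ≤ r) (hr2 : r ≤ 2)
    (h₁ : c ≤ b₁) (h₂ : c ≤ b₂) (hu : u ≠ 0) (x : ℝ) :
    |(1 - cos (u * x)) * exp (-(b₁ * |u| ^ β)) * |u| ^ (-1 - p) -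
        (1 - cos (u * x)) * exp (-(b₂ * |u| ^ β)) * |u| ^ (-1 - p)|
      ≤ 2 * |b₁ - b₂| * |x| ^ r * (|u| ^ (r + β - 1 - p) * exp (-(c * |u| ^ β))) := by
  have hexp := abs_exp_neg_mul_sub_exp_neg_mul_le h₁ h₂ (rpow_nonneg (abs_nonneg u) β)
  have hpow : |u| ^ β * |u| ^ (r - 1 - p) = |u| ^ (r + β - 1 - p) := by
    rw [← rpow_add (abs_pos.2 hu)]; congr 1; ring
  rw [← sub_mul, ← mul_sub]
  calc _ ≤ 2 * |x| ^ r * (|exp (-(b₁ * |u| ^ β)) - exp (-(b₂ * |u| ^ β))| * |u| ^ (r - 1 - p)) :=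
        abs_one_sub_cos_mul_mul_rpow_le hr0 hr2 hu x _
    _ ≤ 2 * |x| ^ r * (|b₁ - b₂| * |u| ^ β * exp (-(c * |u| ^ β)) * |u| ^ (r - 1 - p)) := by
        gcongr
    _ = _ := by rw [← hpow]; ring

lemma abs_integral_sub_integral_le {p β c b₁ b₂ r : ℝ} (hp : p < 2) (hpr : p < r + β)
    (hβ : 0 < β) (hc : 0 < c) (hr0 : 0 ≤ r) (hr2 : r ≤ 2) (h₁ : c ≤ b₁) (h₂ : c ≤ b₂) (x : ℝ) :
    |(∫ u : ℝ, (1 - cos (u * x)) * exp (-(b₁ * |u| ^ β)) * |u| ^ (-1 - p)) -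
        ∫ u : ℝ, (1 - cos (u * x)) * exp (-(b₂ * |u| ^ β)) * |u| ^ (-1 - p)|
      ≤ 2 * (∫ u : ℝ, |u| ^ (r + β - 1 - p) * exp (-(c * |u| ^ β))) * |b₁ - b₂| * |x| ^ r := by
  have hdom := (integrable_abs_rpow_mul_exp_neg_mul_abs_rpow (s := r + β - 1 - p) (by linarith)
    hβ hc).const_mul (2 * |b₁ - b₂| * |x| ^ r)
  rw [← integral_sub (integrable_one_sub_cos_mul_exp_neg_mul_abs_rpow hp hβ (hc.trans_le h₁) x)
    (integrable_one_sub_cos_mul_exp_neg_mul_abs_rpow hp hβ (hc.trans_le h₂) x), ← norm_eq_abs]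
  refine (norm_integral_le_of_norm_le hdom ?_).trans_eq ?_
  · filter_upwards [Measure.ae_ne volume 0] with u hu
    exact abs_integrand_sub_integrand_le hr0 hr2 h₁ h₂ hu x
  · rw [integral_const_mul]; ring

theorem stmt11_general (p β ε r : ℝ) (hp : p ∈ Set.Ioo (0:ℝ) 1) (hβ : β ∈ Set.Ioo (0:ℝ) 2)
    (hε : 0 < ε) (hr : r ∈ Set.Icc p 2)
    (a : ℝ) :
    ∃ K : ℝ, ∀ ρ₁ ρ₂ : ℝ, ε ≤ ρ₁ → ε ≤ ρ₂ → ∀ x : ℝ,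
      |(a⁻¹ * ∫ u : ℝ, (1 - Real.cos (u * x)) * Real.exp (-(ρ₁ ^ β * |u| ^ β)) * |u| ^ (-1 - p)) -
       (a⁻¹ * ∫ u : ℝ, (1 - Real.cos (u * x)) * Real.exp (-(ρ₂ ^ β * |u| ^ β)) * |u| ^ (-1 - p))|
        ≤ K * |ρ₁ ^ β - ρ₂ ^ β| * |x| ^ r := by
  obtain ⟨hp0, hp1⟩ := hp
  obtain ⟨hpr, hr2⟩ := hr
  have hβε : ∀ ρ, ε ≤ ρ → ε ^ β ≤ ρ ^ β := fun ρ hρ => rpow_le_rpow hε.le hρ hβ.1.le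
  refine ⟨|a⁻¹| * (2 * ∫ u : ℝ, |u| ^ (r + β - 1 - p) * exp (-(ε ^ β * |u| ^ β))),
    fun ρ₁ ρ₂ hρ₁ hρ₂ x => ?_⟩
  rw [← mul_sub, abs_mul, mul_assoc |a⁻¹|, mul_assoc |a⁻¹|]
  exact mul_le_mul_of_nonneg_left (abs_integral_sub_integral_le (by linarith)
    (by linarith [hβ.1]) hβ.1 (rpow_pos_of_pos hε β) (by linarith) hr2 (hβε ρ₁ hρ₁)
    (hβε ρ₂ hρ₂) x) (abs_nonneg _)

theorem stmt11 (p β ε r : ℝ) (hp : p ∈ Set.Ioo (0:ℝ) 1) (hβ : β ∈ Set.Ioo (0:ℝ) 2)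
    (hε : 0 < ε) (hr : r ∈ Set.Icc p 2)
    (a : ℝ) (ha : a = ∫ u : ℝ, (1 - Real.cos u) * |u| ^ (-1 - p)) :
    ∃ K : ℝ, ∀ ρ₁ ρ₂ : ℝ, ε ≤ ρ₁ → ε ≤ ρ₂ → ∀ x : ℝ,
      |(a⁻¹ * ∫ u : ℝ, (1 - Real.cos (u * x)) * Real.exp (-(ρ₁ ^ β * |u| ^ β)) * |u| ^ (-1 - p)) -
       (a⁻¹ * ∫ u : ℝ, (1 - Real.cos (u * x)) * Real.exp (-(ρ₂ ^ β * |u| ^ β)) * |u| ^ (-1 - p))|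
        ≤ K * |ρ₁ ^ β - ρ₂ ^ β| * |x| ^ r :=
  stmt11_general p β ε r hp hβ hε hr a
end

section
/- Let p ∈ (0,1) and let a ∈ ℝ, z > 0. Then ∫_0^z (1 ∧ |a+u|^{p-1}) du ≤ K (z 1_{{z ≤ 1}} + z^p 1_{{z > 1}}) where the constant K depends only on p (and not on a). -/
/-!
Since `min 1 |a + u| ^ (p - 1) ≤ 1`, the integral is at most `z`. Since it is also at most
`|a + u| ^ (p - 1)`, it is bounded by the integral of `|x| ^ (p - 1)` over an interval of
length `z`; splitting that interval at `0` leaves at most two intervals `[s, t]` in `[0, ∞)`,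
on each of which `∫ x ^ (p - 1) = (t ^ p - s ^ p) / p ≤ (t - s) ^ p / p` by subadditivity of
`x ↦ x ^ p`. Hence `K = 2 / p` works uniformly in `a`.
-/

open MeasureTheory Set intervalIntegral

lemma Real.rpow_sub_rpow_le_sub_rpow {p x y : ℝ} (hy : 0 ≤ y) (hyx : y ≤ x) (hp : 0 ≤ p)
    (hp1 : p ≤ 1) : x ^ p - y ^ p ≤ (x - y) ^ p := by
  have h := Real.rpow_add_le_add_rpow hy (sub_nonneg.2 hyx) hp hp1
  rw [add_sub_cancel] at h
  linarith

lemma intervalIntegrable_abs_rpow {r : ℝ} (hr : -1 < r) (a b : ℝ) :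
    IntervalIntegrable (fun x : ℝ => |x| ^ r) volume a b := by
  have from_zero_of_nonneg (c : ℝ) (hc : 0 ≤ c) :
      IntervalIntegrable (fun x : ℝ => |x| ^ r) volume 0 c :=
    (intervalIntegrable_rpow' hr).congr fun x hx => by
      rw [uIoc_of_le hc] at hx
      simp only [abs_of_pos hx.1]
  have from_zero (c : ℝ) : IntervalIntegrable (fun x : ℝ => |x| ^ r) volume 0 c := by
    rcases le_total 0 c with hc | hc
    · exact from_zero_of_nonneg c hc
    · rw [IntervalIntegrable.iff_comp_neg]
      simpa only [abs_neg, neg_zero] using from_zero_of_nonneg (-c) (neg_nonneg.2 hc)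
  exact (from_zero a).symm.trans (from_zero b)

section PowerIntegrals

variable {p : ℝ} (hp : 0 < p) (hp1 : p ≤ 1)
include hp hp1

lemma integral_rpow_sub_one_le {s t : ℝ} (hs : 0 ≤ s) (hst : s ≤ t) :
    ∫ x in s..t, x ^ (p - 1) ≤ (t - s) ^ p / p := by
  rw [integral_rpow (Or.inl (by linarith)), sub_add_cancel]
  gcongr
  exact Real.rpow_sub_rpow_le_sub_rpow hs hst hp.le hp1

lemma integral_abs_rpow_sub_one_le_of_nonneg {s t : ℝ} (hs : 0 ≤ s) (hst : s ≤ t) :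
    ∫ x in s..t, |x| ^ (p - 1) ≤ (t - s) ^ p / p := by
  rw [integral_congr (g := fun x => x ^ (p - 1)) fun x hx => by
    rw [uIcc_of_le hst] at hx
    simp only [abs_of_nonneg (hs.trans hx.1)]]
  exact integral_rpow_sub_one_le hp hp1 hs hst

lemma integral_abs_rpow_sub_one_le {s t : ℝ} (hst : s ≤ t) :
    ∫ x in s..t, |x| ^ (p - 1) ≤ 2 * (t - s) ^ p / p := by
  have reflect (s t : ℝ) : ∫ x in s..t, |x| ^ (p - 1) = ∫ x in -t..-s, |x| ^ (p - 1) := by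
    simpa only [abs_neg] using integral_comp_neg (a := s) (b := t) fun x => |x| ^ (p - 1)
  have one_piece (h : ∫ x in s..t, |x| ^ (p - 1) ≤ (t - s) ^ p / p) :
      ∫ x in s..t, |x| ^ (p - 1) ≤ 2 * (t - s) ^ p / p :=
    h.trans (by have := Real.rpow_nonneg (sub_nonneg.2 hst) p; gcongr; linarith)
  rcases le_total 0 s with hs | hs
  · exact one_piece (integral_abs_rpow_sub_one_le_of_nonneg hp hp1 hs hst)
  rcases le_total t 0 with ht | ht
  · refine one_piece ?_
    rw [reflect, show t - s = -s - -t by ring]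
    exact integral_abs_rpow_sub_one_le_of_nonneg hp hp1 (neg_nonneg.2 ht) (neg_le_neg hst)
  · have left : ∫ x in s..0, |x| ^ (p - 1) ≤ (t - s) ^ p / p := by
      rw [reflect, neg_zero]
      calc ∫ x in (0 : ℝ)..-s, |x| ^ (p - 1) ≤ (-s - 0) ^ p / p :=
            integral_abs_rpow_sub_one_le_of_nonneg hp hp1 le_rfl (neg_nonneg.2 hs)
        _ ≤ (t - s) ^ p / p :=
          div_le_div_of_nonneg_right (Real.rpow_le_rpow (by linarith) (by linarith) hp.le) hp.le
    have right : ∫ x in (0 : ℝ)..t, |x| ^ (p - 1) ≤ (t - s) ^ p / p :=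
      calc ∫ x in (0 : ℝ)..t, |x| ^ (p - 1) ≤ (t - 0) ^ p / p :=
            integral_abs_rpow_sub_one_le_of_nonneg hp hp1 le_rfl ht
        _ ≤ (t - s) ^ p / p :=
          div_le_div_of_nonneg_right (Real.rpow_le_rpow (by linarith) (by linarith) hp.le) hp.le
    have hint := intervalIntegrable_abs_rpow (r := p - 1) (by linarith)
    rw [← integral_add_adjacent_intervals (hint s 0) (hint 0 t), mul_div_assoc, two_mul]
    exact add_le_add left right

lemma integral_min_one_abs_add_rpow_le (a : ℝ) {z : ℝ} (hz : 0 ≤ z) :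
    ∫ u in (0 : ℝ)..z, min 1 (|a + u| ^ (p - 1)) ≤ min z (2 * z ^ p / p) := by
  have hint : IntervalIntegrable (fun u => min 1 (|a + u| ^ (p - 1))) volume 0 z := by
    refine (intervalIntegrable_const (c := (1 : ℝ))).mono_fun'
      (by fun_prop : Measurable _).aestronglyMeasurable (.of_forall fun u => ?_)
    dsimp only
    rw [Real.norm_of_nonneg (by positivity)]
    exact min_le_left _ _
  refine le_min ?_ ?_
  · calc ∫ u in (0 : ℝ)..z, min 1 (|a + u| ^ (p - 1)) ≤ ∫ _ in (0 : ℝ)..z, (1 : ℝ) :=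
          integral_mono_on hz hint intervalIntegrable_const fun u _ => min_le_left _ _
      _ = z := by simp
  · calc ∫ u in (0 : ℝ)..z, min 1 (|a + u| ^ (p - 1)) ≤ ∫ u in (0 : ℝ)..z, |a + u| ^ (p - 1) :=
          integral_mono_on hz hint
            (by simpa only [sub_self, add_sub_cancel_left] using
              (intervalIntegrable_abs_rpow (by linarith) a (a + z)).comp_add_left a)
            fun u _ => min_le_right _ _
      _ = ∫ x in a + 0..a + z, |x| ^ (p - 1) := integral_comp_add_left (fun x => |x| ^ (p - 1)) a
      _ ≤ 2 * z ^ p / p := by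
          simpa only [add_sub_add_left_eq_sub, sub_zero] using
            integral_abs_rpow_sub_one_le hp hp1 (by linarith : a + 0 ≤ a + z)

end PowerIntegrals

theorem stmt12 (p : ℝ) (hp : p ∈ Set.Ioo (0:ℝ) 1) :
    ∃ K : ℝ, ∀ a z : ℝ, 0 < z →
      (∫ u in Set.Ioo (0:ℝ) z, min 1 (|a + u| ^ (p - 1))) ≤
        K * (if z ≤ 1 then z else z ^ p) := by
  obtain ⟨hp0, hp1⟩ := hp
  refine ⟨2 / p, fun a z hz => ?_⟩
  rw [← integral_Ioc_eq_integral_Ioo, ← integral_of_le hz.le]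
  have h := integral_min_one_abs_add_rpow_le hp0 hp1.le a hz.le
  split_ifs
  · have hK : 1 ≤ 2 / p := by rw [le_div_iff₀ hp0]; linarith
    exact h.trans ((min_le_left _ _).trans (le_mul_of_one_le_left hz.le hK))
  · rw [div_mul_eq_mul_div]
    exact h.trans (min_le_right _ _)
end

section
/- Let α ∈ (0, k − 1/β), β ∈ (0,2), and let h_k(x) = Σ_{j=0}^{k}(-1)^j C(k,j)(x-j)_+^α. For j ∈ ℕ, j ≥ 1, and x ∈ [0,1] one has |h_k(j+x) − h_k(j)| ≤ K j^{α−k−1} for a constant K independent of j and x. -/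
/-!
On `(k, ∞)` every `(t - m)₊ ^ γ` with `m ≤ k` is smooth, so `h_k` (for exponent `γ`) is
differentiable there with derivative `γ` times `h_k` for exponent `γ - 1`. Together with the Pascal
recursion `h_{k+1}(t) = h_k(t) - h_k(t - 1)` and the mean value theorem, induction on `k` gives
`|h_k(t)| ≤ |γ (γ - 1) ⋯ (γ - k + 1)| (t - k) ^ (γ - k)` when `γ ≤ k`. One more mean value step
bounds the increment over `[j, j + x]` by a multiple of `j ^ (α - k - 1)` once `j > 2k`; the
finitely many remaining `j` only cost a larger constant.
-/

open Finset Real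

theorem sum_range_succ_choose_mul_alternating {R : Type*} [CommRing R] (k : ℕ) (f : ℕ → R) :
    ∑ m ∈ range (k + 2), (-1 : R) ^ m * ((k + 1).choose m : R) * f m
      = ∑ m ∈ range (k + 1), (-1 : R) ^ m * (k.choose m : R) * f m
        - ∑ m ∈ range (k + 1), (-1 : R) ^ m * (k.choose m : R) * f (m + 1) := by
  have hlast : ∑ m ∈ range (k + 2), (-1 : R) ^ m * (k.choose m : R) * f m
      = ∑ m ∈ range (k + 1), (-1 : R) ^ m * (k.choose m : R) * f m := by
    simp [sum_range_succ _ (k + 1)]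
  rw [← hlast, sum_range_succ', sum_range_succ' _ (k + 1), add_sub_right_comm, ← sum_sub_distrib]
  simp only [Nat.choose_succ_succ', Nat.cast_add, Nat.choose_zero_right]
  congr 1
  exact sum_congr rfl fun m _ => by ring

-- The paper's `h_k` for a general exponent `γ`.
noncomputable def truncPowDiff (k : ℕ) (γ t : ℝ) : ℝ :=
  ∑ m ∈ range (k + 1), (-1 : ℝ) ^ m * (k.choose m : ℝ) * max (t - m) 0 ^ γ

theorem truncPowDiff_succ (k : ℕ) (γ t : ℝ) :
    truncPowDiff (k + 1) γ t = truncPowDiff k γ t - truncPowDiff k γ (t - 1) := by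
  simp only [truncPowDiff, sum_range_succ_choose_mul_alternating k (fun m => max (t - m) 0 ^ γ),
    Nat.cast_succ, sub_add_eq_sub_sub_swap, sub_right_comm]

theorem hasDerivAt_max_sub_rpow {m t : ℝ} (ht : m < t) (γ : ℝ) :
    HasDerivAt (fun u => max (u - m) 0 ^ γ) (γ * max (t - m) 0 ^ (γ - 1)) t := by
  have hpos : 0 < t - m := sub_pos.2 ht
  have h := ((hasDerivAt_id t).sub_const m).rpow_const (p := γ) (Or.inl hpos.ne')
  rw [max_eq_left hpos.le]
  refine (h.congr_of_eventuallyEq ?_).congr_deriv (by simp [mul_comm])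
  filter_upwards [eventually_gt_nhds ht] with u hu
  simp [max_eq_left (sub_pos.2 hu).le]

theorem hasDerivAt_truncPowDiff {k : ℕ} {t : ℝ} (ht : k < t) (γ : ℝ) :
    HasDerivAt (truncPowDiff k γ) (γ * truncPowDiff k (γ - 1) t) t := by
  unfold truncPowDiff
  rw [mul_sum]
  refine HasDerivAt.fun_sum fun m hm => ?_
  have hm : (m : ℝ) < t := lt_of_le_of_lt (by exact_mod_cast mem_range_succ_iff.1 hm) ht
  exact ((hasDerivAt_max_sub_rpow hm γ).const_mul _).congr_deriv (by ring)

theorem abs_truncPowDiff_add_sub_le {k : ℕ} {γ s C : ℝ} (hs : k < s)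
    (hC : ∀ c, s ≤ c → |truncPowDiff k (γ - 1) c| ≤ C) {d : ℝ} (hd : 0 ≤ d) :
    |truncPowDiff k γ (s + d) - truncPowDiff k γ s| ≤ |γ| * C * d := by
  have hderiv : ∀ c ∈ Set.Ici s, ‖γ * truncPowDiff k (γ - 1) c‖ ≤ |γ| * C := fun c hc => by
    rw [Real.norm_eq_abs, abs_mul]
    exact mul_le_mul_of_nonneg_left (hC c hc) (abs_nonneg γ)
  simpa [abs_of_nonneg hd] using Convex.norm_image_sub_le_of_norm_hasDerivWithin_le
    (fun c hc => (hasDerivAt_truncPowDiff (hs.trans_le hc) γ).hasDerivWithinAt) hderiv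
    (convex_Ici s) Set.self_mem_Ici (show s + d ∈ Set.Ici s by simpa using hd)

theorem abs_truncPowDiff_le {k : ℕ} {γ s t : ℝ} (hs : k < s) (hst : s ≤ t) (hγ : γ ≤ k) :
    |truncPowDiff k γ t| ≤ |(descPochhammer ℝ k).eval γ| * (s - k) ^ (γ - k) := by
  induction k generalizing γ s t with
  | zero =>
    have ht : 0 < t := by simp at hs; linarith
    simp only [truncPowDiff, zero_add, range_one, sum_singleton, Nat.cast_zero, sub_zero, pow_zero,
      Nat.choose_self, Nat.cast_one, mul_one, one_mul, max_eq_left ht.le,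
      abs_of_pos (rpow_pos_of_pos ht γ), descPochhammer_zero, Polynomial.eval_one, abs_one]
    exact rpow_le_rpow_of_nonpos (by simpa using hs) hst (by simpa using hγ)
  | succ k ih =>
    push_cast at hs hγ
    have hC : ∀ c, t - 1 ≤ c → |truncPowDiff k (γ - 1) c|
        ≤ |(descPochhammer ℝ k).eval (γ - 1)| * (s - 1 - k) ^ (γ - 1 - k) :=
      fun c hc => ih (by linarith) (by linarith) (by linarith)
    have h := abs_truncPowDiff_add_sub_le (by linarith) hC zero_le_one
    rw [sub_add_cancel, mul_one] at h
    rw [truncPowDiff_succ]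
    convert h using 1
    simp only [descPochhammer_succ_left, Polynomial.eval_mul, Polynomial.eval_X, Polynomial.eval_comp,
      Polynomial.eval_sub, Polynomial.eval_one, abs_mul, Nat.cast_succ]
    ring_nf

theorem abs_truncPowDiff_add_sub_le_rpow {k : ℕ} {γ s d : ℝ} (hγ : γ ≤ k + 1) (hs : 2 * k < s)
    (hd₀ : 0 ≤ d) (hd₁ : d ≤ 1) :
    |truncPowDiff k γ (s + d) - truncPowDiff k γ s|
      ≤ |γ| * |(descPochhammer ℝ k).eval (γ - 1)| * 2 ^ (k + 1 - γ) * s ^ (γ - k - 1) := by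
  have hk : (0 : ℝ) ≤ k := k.cast_nonneg
  have hs₀ : 0 < s := by linarith
  have hexp : γ - 1 - k ≤ 0 := by linarith
  have hC : ∀ c, s ≤ c → |truncPowDiff k (γ - 1) c|
      ≤ |(descPochhammer ℝ k).eval (γ - 1)| * (s / 2) ^ (γ - 1 - k) := fun c hc =>
    (abs_truncPowDiff_le (by linarith) hc (by linarith)).trans <| mul_le_mul_of_nonneg_left
      (rpow_le_rpow_of_nonpos (by positivity) (by linarith) hexp) (abs_nonneg _)
  have hhalf : (s / 2) ^ (γ - 1 - k) = 2 ^ (k + 1 - γ) * s ^ (γ - k - 1) := by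
    rw [div_rpow hs₀.le zero_le_two, div_eq_mul_inv, ← rpow_neg zero_le_two, mul_comm]
    ring_nf
  calc |truncPowDiff k γ (s + d) - truncPowDiff k γ s|
      ≤ |γ| * (|(descPochhammer ℝ k).eval (γ - 1)| * (s / 2) ^ (γ - 1 - k)) * d :=
        abs_truncPowDiff_add_sub_le (by linarith) hC hd₀
    _ ≤ |γ| * (|(descPochhammer ℝ k).eval (γ - 1)| * (s / 2) ^ (γ - 1 - k)) := by
        apply mul_le_of_le_one_right (by positivity) hd₁
    _ = _ := by rw [hhalf]; ring

theorem abs_truncPowDiff_le_two_pow_mul_rpow (k : ℕ) {γ t T : ℝ} (hγ : 0 ≤ γ) (hT : 0 ≤ T)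
    (htT : t ≤ T) : |truncPowDiff k γ t| ≤ 2 ^ k * T ^ γ := by
  have hterm : ∀ m ∈ range (k + 1), |(-1 : ℝ) ^ m * (k.choose m : ℝ) * max (t - m) 0 ^ γ|
      ≤ (k.choose m : ℝ) * T ^ γ := fun m _ => by
    rw [abs_mul, abs_mul, abs_pow, abs_neg, abs_one, one_pow, one_mul, Nat.abs_cast,
      abs_of_nonneg (rpow_nonneg (le_max_right _ _) γ)]
    gcongr
    exact max_le (by linarith [(m.cast_nonneg : (0 : ℝ) ≤ m)]) hT
  calc |truncPowDiff k γ t| ≤ ∑ m ∈ range (k + 1), (k.choose m : ℝ) * T ^ γ :=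
        (abs_sum_le_sum_abs _ _).trans (sum_le_sum hterm)
    _ = 2 ^ k * T ^ γ := by
        rw [← sum_mul, ← Nat.cast_sum, k.sum_range_choose, Nat.cast_pow, Nat.cast_two]

theorem stmt17_general (k : ℕ) (β α : ℝ) (hβ : β ∈ Set.Ioo (0:ℝ) 2)
    (hα : α ∈ Set.Ioo 0 ((k:ℝ) - 1/β)) :
    ∃ K : ℝ, ∀ j : ℕ, 1 ≤ j → ∀ x ∈ Set.Icc (0:ℝ) 1,
      |(∑ m ∈ Finset.range (k+1), (-1:ℝ)^m * (k.choose m : ℝ) * (max ((j:ℝ) + x - m) 0) ^ α) -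
       (∑ m ∈ Finset.range (k+1), (-1:ℝ)^m * (k.choose m : ℝ) * (max ((j:ℝ) - m) 0) ^ α)|
        ≤ K * (j:ℝ) ^ (α - (k:ℝ) - 1) := by
  obtain ⟨hα₀, hαβ⟩ := hα
  have hαk : α ≤ k + 1 := by linarith [one_div_pos.2 hβ.1]
  let K₁ := |α| * |(descPochhammer ℝ k).eval (α - 1)| * 2 ^ (k + 1 - α)
  let K₂ := 2 ^ (k + 1) * (2 * k + 1 : ℝ) ^ α / (2 * k : ℝ) ^ (α - k - 1)
  refine ⟨max K₁ K₂, fun j hj x ⟨hx₀, hx₁⟩ => ?_⟩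
  change |truncPowDiff k α (j + x) - truncPowDiff k α j| ≤ _
  have hj : (1 : ℝ) ≤ j := by exact_mod_cast hj
  have hjpow : 0 ≤ (j : ℝ) ^ (α - k - 1) := by positivity
  rcases lt_or_ge (2 * k : ℝ) j with hfar | hnear
  · calc _ ≤ K₁ * (j : ℝ) ^ (α - k - 1) := abs_truncPowDiff_add_sub_le_rpow hαk hfar hx₀ hx₁
      _ ≤ _ := mul_le_mul_of_nonneg_right (le_max_left _ _) hjpow
  · have hbound : ∀ t ≤ (2 * k + 1 : ℝ), |truncPowDiff k α t| ≤ 2 ^ k * (2 * k + 1 : ℝ) ^ α :=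
      fun t ht => abs_truncPowDiff_le_two_pow_mul_rpow k hα₀.le (by positivity) ht
    have hpow : (0 : ℝ) < (2 * k : ℝ) ^ (α - k - 1) := rpow_pos_of_pos (by linarith) _
    calc _ ≤ |truncPowDiff k α (j + x)| + |truncPowDiff k α j| := abs_sub _ _
      _ ≤ 2 ^ k * (2 * k + 1 : ℝ) ^ α + 2 ^ k * (2 * k + 1 : ℝ) ^ α :=
          add_le_add (hbound _ (by linarith)) (hbound _ (by linarith))
      _ = K₂ * (2 * k : ℝ) ^ (α - k - 1) := by rw [div_mul_cancel₀ _ hpow.ne']; ring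
      _ ≤ K₂ * (j : ℝ) ^ (α - k - 1) := mul_le_mul_of_nonneg_left
          (rpow_le_rpow_of_nonpos (by linarith) hnear (by linarith)) (by positivity)
      _ ≤ _ := mul_le_mul_of_nonneg_right (le_max_right _ _) hjpow

theorem stmt17 (k : ℕ) (hk : 1 ≤ k) (β α : ℝ) (hβ : β ∈ Set.Ioo (0:ℝ) 2)
    (hα : α ∈ Set.Ioo 0 ((k:ℝ) - 1/β)) :
    ∃ K : ℝ, ∀ j : ℕ, 1 ≤ j → ∀ x ∈ Set.Icc (0:ℝ) 1,
      |(∑ m ∈ Finset.range (k+1), (-1:ℝ)^m * (k.choose m : ℝ) * (max ((j:ℝ) + x - m) 0) ^ α) -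
       (∑ m ∈ Finset.range (k+1), (-1:ℝ)^m * (k.choose m : ℝ) * (max ((j:ℝ) - m) 0) ^ α)|
        ≤ K * (j:ℝ) ^ (α - (k:ℝ) - 1) :=
  stmt17_general k β α hβ hα
end
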